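/- If there exists a Hadamard matrix of size n+1, then G_n contains at least |V(G_n)|/n^2 pairwise vertex-disjoint cliques of size n. -/

import Mathlib

/-- A Hadamard matrix: entries in `{-1,1}` and pairwise orthogonal rows. -/
def IsHadamard {m : ℕ} (M : Matrix (Fin m) (Fin m) ℝ) : Prop :=
  (∀ i j, M i j = 1 ∨ M i j = -1) ∧ ∀ i j, i ≠ j → ∑ k, M i k * M j k = 0

/-- The graph `G_n`. -/
def Gn (n : ℕ) :
    SimpleGraph {x : Fin n → Bool // hammingDist x (fun _ => false) = (n + 1) / 2} :=
  SimpleGraph.fromRel (fun x y => hammingDist x.1 y.1 = (n + 1) / 2)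

/-!
Normalise the Hadamard matrix so that its first row and first column consist of ones. For ±1
vectors `∑ uᵢ vᵢ = (n + 1) - 2 d(u, v)`, so any two rows are at Hamming distance `(n + 1) / 2`.
Dropping the first coordinate and recording where the entries are `-1`, the first row becomes the
zero word and the other `n` rows become `n` words of weight `(n + 1) / 2` at mutual distance
`(n + 1) / 2`: an `n`-clique `C` of `G_n`.

The symmetric group acts transitively on `V(G_n)` by graph automorphisms. If `S` is the union of
fewer than `|V| / n²` disjoint translates of `C`, then `|σC ∩ S|` averages to `|C| |S| / |V| < 1`
over all permutations `σ`, so some translate misses `S`; greedily this yields `|V| / n²` disjoint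
translates of `C`.
-/

open Finset MulAction
open scoped Pointwise

namespace MulAction

variable {G V : Type*} [Group G] [MulAction G V] [Fintype G] [Fintype V] [DecidableEq V]
  [IsPretransitive G V]

theorem card_filter_smul_eq_mul_card (a b : V) :
    #{g : G | g • a = b} * Fintype.card V = Fintype.card G := by
  have hfiber : ∀ b', #{g : G | g • a = b'} = #{g : G | g • a = b} := fun b' => by
    obtain ⟨h, rfl⟩ := exists_smul_eq G b b'
    refine card_equiv (Equiv.mulLeft h⁻¹) fun g => ?_
    simp [mul_smul, inv_smul_eq_iff]
  calc #{g : G | g • a = b} * Fintype.card V = ∑ b', #{g : G | g • a = b'} := by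
        simp [hfiber, mul_comm]
    _ = Fintype.card G := (card_eq_sum_card_fiberwise fun _ _ => mem_univ _).symm

theorem exists_disjoint_smul_finset {C S : Finset V} (h : #C * #S < Fintype.card V) :
    ∃ g : G, Disjoint (g • C) S := by
  by_contra! hmeet
  obtain ⟨v⟩ : Nonempty V := Fintype.card_pos_iff.mp (by omega)
  set k := #{g : G | g • v = v}
  have hk : 0 < k := card_pos.mpr ⟨1, by simp⟩
  have hG : k * Fintype.card V = Fintype.card G := card_filter_smul_eq_mul_card v v
  have hfiber (a b : V) : #{g : G | g • a = b} = k :=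
    Nat.eq_of_mul_eq_mul_right (Fintype.card_pos_iff.mpr ⟨v⟩)
      ((card_filter_smul_eq_mul_card a b).trans hG.symm)
  -- Double count the pairs `(g, c)` with `g • c ∈ S`: every `g` has at least one,
  -- every `c` exactly `#S * k`.
  have hcount := card_mul_le_card_mul (s := (univ : Finset G)) (t := C)
    (fun g c => g • c ∈ S) (m := 1) (n := #S * k) ?_ ?_
  · rw [card_univ, mul_one, ← hG] at hcount
    nlinarith
  · intro g _
    obtain ⟨x, hxC, hxS⟩ := not_disjoint_iff.mp (hmeet g)
    obtain ⟨c, hc, rfl⟩ := mem_smul_finset.mp hxC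
    exact card_pos.mpr ⟨c, by simp [bipartiteAbove, hc, hxS]⟩
  · intro c _
    rw [bipartiteBelow, card_eq_sum_card_fiberwise (f := (· • c)) (t := S) fun g hg => by
      simpa using hg]
    refine (sum_le_sum (g := fun _ => k) fun x hx => ?_).trans_eq (by rw [sum_const, smul_eq_mul])
    rw [filter_filter, ← hfiber c x]
    exact card_le_card (monotone_filter_right _ fun g _ hg => hg.2)

theorem exists_pairwiseDisjoint_smul_finset {C : Finset V} (hC : C.Nonempty) {t : ℕ}
    (ht : t * #C ^ 2 ≤ Fintype.card V) :
    ∃ 𝒞 : Finset (Finset V), (∀ s ∈ 𝒞, ∃ g : G, g • C = s) ∧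
      (𝒞 : Set (Finset V)).PairwiseDisjoint id ∧ #𝒞 = t := by
  induction t with
  | zero => exact ⟨∅, by simp, by simp, rfl⟩
  | succ t ih =>
    obtain ⟨𝒞, h𝒞, hdisj, rfl⟩ := ih (le_trans (by gcongr; omega) ht)
    have hunion : #(𝒞.biUnion id) ≤ #𝒞 * #C := by
      refine card_biUnion_le_card_mul _ _ _ fun s hs => ?_
      obtain ⟨g, rfl⟩ := h𝒞 s hs
      exact (card_smul_finset g C).le
    obtain ⟨g, hg⟩ := exists_disjoint_smul_finset (G := G) (C := C) (S := 𝒞.biUnion id) (by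
      have := hC.card_pos
      calc #C * #(𝒞.biUnion id) ≤ #C * (#𝒞 * #C) := by gcongr
        _ < (#𝒞 + 1) * #C ^ 2 := by nlinarith
        _ ≤ Fintype.card V := ht)
    have hnew : g • C ∉ 𝒞 := fun hmem =>
      (hC.smul_finset (a := g)).ne_empty
        (disjoint_self.mp (hg.mono_right (subset_biUnion_of_mem id hmem)))
    refine ⟨insert (g • C) 𝒞, ?_, ?_, card_insert_of_notMem hnew⟩
    · exact forall_mem_insert _ _ _ |>.mpr ⟨⟨g, rfl⟩, h𝒞⟩
    · rw [coe_insert]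
      exact hdisj.insert fun s hs _ => (disjoint_biUnion_right _ _ _).mp hg s hs

end MulAction

theorem SimpleGraph.exists_isNClique_of_pairwise_adj {V ι : Type*} [Fintype ι]
    {G : SimpleGraph V} (f : ι → V) (hf : Pairwise fun i j => G.Adj (f i) (f j)) :
    ∃ s : Finset V, G.IsNClique (Fintype.card ι) s := by
  let φ : (⊤ : SimpleGraph ι) →g G := ⟨f, fun h => hf h⟩
  exact ⟨_, isNClique_map_copy_top (φ.toCopy φ.injective_of_top_hom)⟩

theorem SimpleGraph.IsNClique.smul_finset {M V : Type*} [Group M] [MulAction M V] [DecidableEq V]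
    {G : SimpleGraph V} {k : ℕ} {s : Finset V} (hs : G.IsNClique k s) {g : M}
    (hg : ∀ a b, G.Adj a b → G.Adj (g • a) (g • b)) : G.IsNClique k (g • s) := by
  refine ⟨fun x hx y hy hxy => ?_, by rw [card_smul_finset, hs.card_eq]⟩
  obtain ⟨a, ha, rfl⟩ := mem_smul_finset.mp (mem_coe.mp hx)
  obtain ⟨b, hb, rfl⟩ := mem_smul_finset.mp (mem_coe.mp hy)
  exact hg a b (hs.isClique ha hb fun h => hxy (h ▸ rfl))

theorem hammingDist_comp_equiv {ι κ : Type*} [Fintype ι] [Fintype κ]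
    {β : ι → Type*} [∀ i, DecidableEq (β i)] (e : κ ≃ ι) (x y : ∀ i, β i) :
    hammingDist (fun k => x (e k)) (fun k => y (e k)) = hammingDist x y :=
  card_equiv e (by simp)

abbrev HammingSphere (ι : Type*) [Fintype ι] (k : ℕ) :=
  {x : ι → Bool // hammingDist x (fun _ => false) = k}

namespace HammingSphere

variable {ι : Type*} [Fintype ι] {k : ℕ}

instance : MulAction (Equiv.Perm ι) (HammingSphere ι k) where
  smul σ x := ⟨fun i => x.1 (σ⁻¹ i), (hammingDist_comp_equiv σ⁻¹ x.1 _).trans x.2⟩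
  one_smul _ := rfl
  mul_smul _ _ _ := rfl

theorem coe_smul (σ : Equiv.Perm ι) (x : HammingSphere ι k) :
    ((σ • x : HammingSphere ι k) : ι → Bool) = fun i => x.1 (σ⁻¹ i) := rfl

theorem hammingDist_smul (σ : Equiv.Perm ι) (x y : HammingSphere ι k) :
    hammingDist (σ • x).1 (σ • y).1 = hammingDist x.1 y.1 :=
  hammingDist_comp_equiv σ⁻¹ x.1 y.1

variable [DecidableEq ι]

def ofFinset : Set.powersetCard ι k →[Equiv.Perm ι] HammingSphere ι k where
  toFun s := ⟨fun i => decide (i ∈ (s : Finset ι)), by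
    simp [hammingDist]⟩
  map_smul' σ s := by
    ext i
    simp [coe_smul, Set.powersetCard.coe_smul, ← inv_smul_mem_iff]

theorem ofFinset_surjective : Function.Surjective (ofFinset (ι := ι) (k := k)) := fun x =>
  ⟨⟨({i | x.1 i} : Finset ι), by simpa [hammingDist] using x.2⟩, by
    ext i
    change decide (_ ∈ _) = _
    simp⟩

instance : IsPretransitive (Equiv.Perm ι) (HammingSphere ι k) :=
  IsPretransitive.of_surjective_map ofFinset_surjective Set.powersetCard.isPretransitive

end HammingSphere

theorem sum_mul_eq_card_sub_two_mul_hammingDist {ι : Type*} [Fintype ι]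
    {u v : ι → ℝ} (hu : ∀ i, u i = 1 ∨ u i = -1) (hv : ∀ i, v i = 1 ∨ v i = -1) :
    ∑ i, u i * v i = Fintype.card ι - 2 * hammingDist u v := by
  have hterm (i : ι) : u i * v i = 1 - 2 * if u i ≠ v i then 1 else 0 := by
    rcases hu i with h | h <;> rcases hv i with h' | h' <;> norm_num [h, h']
  simp only [hterm, sum_sub_distrib, ← mul_sum, sum_boole, hammingDist]
  simp

theorem hammingDist_decide_eq_neg_one {ι : Type*} [Fintype ι] {u v : ι → ℝ}
    (hu : ∀ i, u i = 1 ∨ u i = -1) (hv : ∀ i, v i = 1 ∨ v i = -1) :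
    hammingDist (fun i => decide (u i = -1)) (fun i => decide (v i = -1)) = hammingDist u v := by
  unfold hammingDist
  congr 1
  ext i
  rcases hu i with h | h <;> rcases hv i with h' | h' <;> norm_num [h, h']

theorem hammingDist_eq_hammingDist_tail {n : ℕ} {β : Type*} [DecidableEq β]
    {x y : Fin (n + 1) → β} (h : x 0 = y 0) :
    hammingDist x y = hammingDist (Fin.tail x) (Fin.tail y) := by
  rw [hammingDist, hammingDist, card_filter, card_filter, Fin.sum_univ_succ,
    if_neg (not_not.mpr h), zero_add]
  rfl

namespace IsHadamard

variable {m : ℕ} {M : Matrix (Fin m) (Fin m) ℝ}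

theorem mul_self_eq_one (hM : IsHadamard M) (i j : Fin m) : M i j * M i j = 1 :=
  mul_self_eq_one_iff.mpr (hM.1 i j)

theorem two_mul_hammingDist (hM : IsHadamard M) {i j : Fin m} (hij : i ≠ j) :
    2 * hammingDist (M i) (M j) = m := by
  have := sum_mul_eq_card_sub_two_mul_hammingDist (hM.1 i) (hM.1 j)
  rw [hM.2 i j hij, Fintype.card_fin] at this
  exact_mod_cast (sub_eq_zero.mp this.symm).symm

theorem exists_normalized (hM : IsHadamard M) (r c : Fin m) :
    ∃ N : Matrix (Fin m) (Fin m) ℝ, IsHadamard N ∧ (∀ j, N r j = 1) ∧ ∀ i, N i c = 1 := by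
  have hsq := hM.mul_self_eq_one
  -- rescale row `i` by `M r c * M i c` and column `j` by `M r j`
  refine ⟨fun i j => M r c * M i c * M i j * M r j, ⟨fun i j => mul_self_eq_one_iff.mp ?_,
    fun i i' hii' => ?_⟩, fun j => ?_, fun i => ?_⟩
  · calc _ = (M r c * M r c) * (M i c * M i c) * (M i j * M i j) * (M r j * M r j) := by ring
      _ = 1 := by simp [hsq]
  · calc _ = (M r c * M r c) * (M i c * M i' c) * ∑ k, M i k * M i' k * (M r k * M r k) := by
          rw [mul_sum]; exact sum_congr rfl fun k _ => by ring
      _ = 0 := by simp [hsq, hM.2 i i' hii']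
  · calc _ = (M r c * M r c) * (M r j * M r j) := by ring
      _ = 1 := by simp [hsq]
  · calc _ = (M r c * M r c) * (M i c * M i c) := by ring
      _ = 1 := by simp [hsq]

end IsHadamard

theorem gn_adj {n : ℕ} {x y : HammingSphere (Fin n) ((n + 1) / 2)} :
    (Gn n).Adj x y ↔ x ≠ y ∧ hammingDist x.1 y.1 = (n + 1) / 2 := by
  simp [Gn, hammingDist_comm y.1]

theorem gn_adj_smul {n : ℕ} (σ : Equiv.Perm (Fin n))
    {x y : HammingSphere (Fin n) ((n + 1) / 2)} (h : (Gn n).Adj x y) :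
    (Gn n).Adj (σ • x) (σ • y) := by
  rw [gn_adj] at h ⊢
  exact ⟨(MulAction.injective σ).ne h.1, (HammingSphere.hammingDist_smul σ x y).trans h.2⟩

theorem exists_isNClique_gn {n : ℕ} {M : Matrix (Fin (n + 1)) (Fin (n + 1)) ℝ}
    (hM : IsHadamard M) :
    ∃ C : Finset (HammingSphere (Fin n) ((n + 1) / 2)), (Gn n).IsNClique n C := by
  obtain ⟨N, hN, hrow, hcol⟩ := hM.exists_normalized 0 0
  let pattern (i : Fin (n + 1)) : Fin n → Bool := fun j => decide (Fin.tail (N i) j = -1)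
  have hdist {i i' : Fin (n + 1)} (hii' : i ≠ i') :
      hammingDist (pattern i) (pattern i') = (n + 1) / 2 := by
    calc hammingDist (pattern i) (pattern i')
        = hammingDist (Fin.tail (N i)) (Fin.tail (N i')) :=
          hammingDist_decide_eq_neg_one (fun _ => hN.1 i _) (fun _ => hN.1 i' _)
      _ = hammingDist (N i) (N i') :=
          (hammingDist_eq_hammingDist_tail ((hcol i).trans (hcol i').symm)).symm
      _ = (n + 1) / 2 := by have := hN.two_mul_hammingDist hii'; omega
  have hpattern_zero : pattern 0 = fun _ => false := by
    funext j; norm_num [pattern, Fin.tail, hrow]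
  let vertex (i : Fin n) : HammingSphere (Fin n) ((n + 1) / 2) :=
    ⟨pattern i.succ, hpattern_zero ▸ hdist (Fin.succ_ne_zero i)⟩
  simpa using SimpleGraph.exists_isNClique_of_pairwise_adj vertex fun i i' hii' => by
    have := hdist (Fin.succ_injective _ |>.ne hii')
    refine gn_adj.mpr ⟨fun h => ?_, this⟩
    have h' : pattern i.succ = pattern i'.succ := congrArg Subtype.val h
    rw [h', hammingDist_self] at this
    omega

theorem stmt_6_general (n : ℕ)
    (hH : ∃ M : Matrix (Fin (n + 1)) (Fin (n + 1)) ℝ, IsHadamard M) :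
    ∃ 𝒞 : Finset (Finset {x : Fin n → Bool // hammingDist x (fun _ => false) = (n + 1) / 2}),
      (∀ s ∈ 𝒞, (Gn n).IsNClique n s) ∧
      (𝒞 : Set (Finset {x : Fin n → Bool // hammingDist x (fun _ => false) = (n + 1) / 2})).PairwiseDisjoint id ∧
      Fintype.card {x : Fin n → Bool // hammingDist x (fun _ => false) = (n + 1) / 2} / n ^ 2 ≤ 𝒞.card := by
  obtain ⟨M, hM⟩ := hH
  obtain ⟨C, hC⟩ := exists_isNClique_gn hM
  rcases C.eq_empty_or_nonempty with rfl | hne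
  · obtain rfl : n = 0 := by simpa using hC.card_eq.symm
    exact ⟨∅, by simp, by simp, by simp⟩
  obtain ⟨𝒞, htranslate, hdisj, hcard⟩ :=
    exists_pairwiseDisjoint_smul_finset (G := Equiv.Perm (Fin n)) hne
      (by rw [hC.card_eq]; exact Nat.div_mul_le_self _ _)
  refine ⟨𝒞, fun s hs => ?_, hdisj, hcard.ge⟩
  obtain ⟨σ, rfl⟩ := htranslate s hs
  exact hC.smul_finset fun _ _ => gn_adj_smul σ

theorem stmt_6 (n : ℕ) (hn : Odd n)
    (hH : ∃ M : Matrix (Fin (n + 1)) (Fin (n + 1)) ℝ, IsHadamard M) :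
    ∃ 𝒞 : Finset (Finset {x : Fin n → Bool // hammingDist x (fun _ => false) = (n + 1) / 2}),
      (∀ s ∈ 𝒞, (Gn n).IsNClique n s) ∧
      (𝒞 : Set (Finset {x : Fin n → Bool // hammingDist x (fun _ => false) = (n + 1) / 2})).PairwiseDisjoint id ∧
      Fintype.card {x : Fin n → Bool // hammingDist x (fun _ => false) = (n + 1) / 2} / n ^ 2 ≤ 𝒞.card :=
  stmt_6_general n hH
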